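/- arXiv:1902.05501 — 2 statements merged into one kernel-verified Lean document; each statement's English description precedes it below -/
import Mathlib

section
/- For q ∈ ℕ, |z| > 0, r̄ > 0, R = sqrt(r²+z²), R̄ = sqrt(r̄²+z²): ∫_0^r̄ (R − |z|)^q (r²/R) dr = r̄(R̄ − |z|)^{q+1}/(q+2) + (2|z|/(q+2))·∫_{sqrt(2|z|)}^{sqrt(R̄+|z|)} (t² − 2|z|)^{q+1/2} dt. -/
/-!
With `a = |z|` and `R = √(r² + a²)`, the substitution `t = √(R + a)` gives
`t² - 2a = R - a` and `r = √(R - a) · t`, which turns the left side into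
`2 ∫ t² (t² - 2a)^(q+1/2) dt`. Since `t (t² - 2a)^(q+3/2)` is an antiderivative of
`(2q + 4) t² (t² - 2a)^(q+1/2) - 2a (t² - 2a)^(q+1/2)`, that integral
equals the boundary term `r̄ (R̄ - a)^(q+1)` plus `2a` times the auxiliary integral, all
divided by `2q + 4`.
-/

open Real intervalIntegral

lemma rpow_natCast_add_half {x : ℝ} (hx : 0 ≤ x) (n : ℕ) :
    x ^ ((n : ℝ) + 1 / 2) = x ^ n * √x := by
  rw [rpow_add' hx (by positivity), rpow_natCast, sqrt_eq_rpow]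

lemma le_sqrt_sq_add_sq (r a : ℝ) : a ≤ √(r ^ 2 + a ^ 2) :=
  (le_abs_self a).trans (abs_le_sqrt (by nlinarith))

lemma sqrt_sqrt_sub_mul_sqrt_sqrt_add {r : ℝ} (hr : 0 ≤ r) (a : ℝ) :
    √(√(r ^ 2 + a ^ 2) - a) * √(√(r ^ 2 + a ^ 2) + a) = r := by
  have hR := sq_sqrt (by positivity : 0 ≤ r ^ 2 + a ^ 2)
  rw [← sqrt_mul (sub_nonneg.2 (le_sqrt_sq_add_sq r a)),
    show (√(r ^ 2 + a ^ 2) - a) * (√(r ^ 2 + a ^ 2) + a) = r ^ 2 by linear_combination hR,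
    sqrt_sq hr]

lemma hasDerivAt_sqrt_sqrt_sq_add_sq_add {a : ℝ} (ha : 0 < a) (r : ℝ) :
    HasDerivAt (fun r => √(√(r ^ 2 + a ^ 2) + a))
      (r / (2 * √(√(r ^ 2 + a ^ 2) + a) * √(r ^ 2 + a ^ 2))) r := by
  have hR : 0 < √(r ^ 2 + a ^ 2) := sqrt_pos.2 (by positivity)
  have hh : 0 < √(√(r ^ 2 + a ^ 2) + a) := sqrt_pos.2 (by positivity)
  convert ((((hasDerivAt_pow 2 r).add_const (a ^ 2)).sqrt (by positivity)).add_const a).sqrt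
    (by positivity) using 1
  field_simp
  ring

theorem integral_pow_mul_sq_div_sqrt_eq {a : ℝ} (ha : 0 < a) {b : ℝ} (hb : 0 ≤ b) (q : ℕ) :
    ∫ r in (0 : ℝ)..b, (√(r ^ 2 + a ^ 2) - a) ^ q * (r ^ 2 / √(r ^ 2 + a ^ 2)) =
      2 * ∫ t in √(2 * a)..√(√(b ^ 2 + a ^ 2) + a),
        t ^ 2 * (t ^ 2 - 2 * a) ^ ((q : ℝ) + 1 / 2) := by
  have h0 : √(√((0 : ℝ) ^ 2 + a ^ 2) + a) = √(2 * a) := by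
    rw [zero_pow two_ne_zero, zero_add, sqrt_sq ha.le, two_mul]
  have hg : Continuous fun t : ℝ => 2 * (t ^ 2 * (t ^ 2 - 2 * a) ^ ((q : ℝ) + 1 / 2)) := by
    fun_prop (disch := positivity)
  rw [← h0, ← integral_const_mul, ← integral_comp_mul_deriv
    (fun r _ => hasDerivAt_sqrt_sqrt_sq_add_sq_add ha r) ?cont hg]
  case cont =>
    refine (continuous_id.div (by fun_prop) fun r => ?_).continuousOn
    have : 0 < √(√(r ^ 2 + a ^ 2) + a) := sqrt_pos.2 (by positivity)
    have : 0 < √(r ^ 2 + a ^ 2) := sqrt_pos.2 (by positivity)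
    positivity
  refine integral_congr fun r hr => ?_
  have hr0 : 0 ≤ r := (Set.uIcc_of_le hb ▸ hr).1
  set R := √(r ^ 2 + a ^ 2)
  have hR : 0 < R := sqrt_pos.2 (by positivity)
  have hh : 0 < √(R + a) := sqrt_pos.2 (by positivity)
  have hRa : 0 ≤ R - a := sub_nonneg.2 (le_sqrt_sq_add_sq r a)
  have hsq : √(R + a) ^ 2 = R + a := sq_sqrt (by positivity)
  have hprod := sqrt_sqrt_sub_mul_sqrt_sqrt_add hr0 a
  simp only [Function.comp_apply]
  rw [hsq, show R + a - 2 * a = R - a by ring, rpow_natCast_add_half hRa]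
  field_simp
  linear_combination (-(r * √(R + a) * (R - a) ^ q)) * hprod +
      (r * √(R - a) * (R - a) ^ q) * hsq

theorem integral_sq_mul_rpow_sq_sub {c p s : ℝ} (hc : 0 ≤ c) (hp : 0 ≤ p) (hs : √c ≤ s) :
    (2 * p + 3) * ∫ t in √c..s, t ^ 2 * (t ^ 2 - c) ^ p =
      s * (s ^ 2 - c) ^ (p + 1) + c * ∫ t in √c..s, (t ^ 2 - c) ^ p := by
  have hderiv : ∀ t ∈ Set.uIcc √c s, HasDerivAt (fun t => t * (t ^ 2 - c) ^ (p + 1))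
      ((2 * p + 3) * (t ^ 2 * (t ^ 2 - c) ^ p) - c * (t ^ 2 - c) ^ p) t := by
    intro t ht
    have hct : 0 ≤ t ^ 2 - c := by
      rw [Set.uIcc_of_le hs] at ht
      nlinarith [ht.1, sq_sqrt hc, sqrt_nonneg c]
    have hpow := ((hasDerivAt_pow 2 t).sub_const c).rpow_const (p := p + 1) (Or.inr (by linarith))
    refine ((hasDerivAt_id' t).mul hpow).congr_deriv ?_
    rw [add_sub_cancel_right, rpow_add_one' hct (by linarith)]
    push_cast
    ring
  have hcont : Continuous fun t : ℝ => (t ^ 2 - c) ^ p := by fun_prop (disch := assumption)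
  have hcont' : Continuous fun t : ℝ => t ^ 2 * (t ^ 2 - c) ^ p := by
    fun_prop (disch := assumption)
  have hFTC := integral_eq_sub_of_hasDerivAt hderiv
    ((by fun_prop : Continuous fun t : ℝ => (2 * p + 3) * (t ^ 2 * (t ^ 2 - c) ^ p) -
      c * (t ^ 2 - c) ^ p).intervalIntegrable _ _)
  rw [integral_sub ((hcont'.intervalIntegrable _ _).const_mul _)
      ((hcont.intervalIntegrable _ _).const_mul _), integral_const_mul, integral_const_mul,
    sq_sqrt hc, sub_self, zero_rpow (by linarith), mul_zero, sub_zero] at hFTC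
  linarith

/-- for `q ∈ ℕ`, `|z| > 0`, `r̄ > 0`, `R = sqrt(r²+z²)`, `R̄ = sqrt(r̄²+z²)`:
`∫_0^r̄ (R - |z|)^q (r²/R) dr = r̄ (R̄ - |z|)^{q+1}/(q+2)
  + (2|z|/(q+2)) ∫_{sqrt(2|z|)}^{sqrt(R̄+|z|)} (t² - 2|z|)^{q+1/2} dt`. -/
theorem stmt9 (q : ℕ) (z rbar : ℝ) (hz : 0 < |z|) (hrbar : 0 < rbar) :
    ∫ r in (0 : ℝ)..rbar,
        (Real.sqrt (r ^ 2 + z ^ 2) - |z|) ^ q *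
          (r ^ 2 / Real.sqrt (r ^ 2 + z ^ 2)) =
      rbar * (Real.sqrt (rbar ^ 2 + z ^ 2) - |z|) ^ (q + 1) / ((q : ℝ) + 2) +
        (2 * |z| / ((q : ℝ) + 2)) *
          ∫ t in Real.sqrt (2 * |z|)..Real.sqrt (Real.sqrt (rbar ^ 2 + z ^ 2) + |z|),
            (t ^ 2 - 2 * |z|) ^ ((q : ℝ) + 1 / 2) := by
  simp_rw [← sq_abs z]
  rw [integral_pow_mul_sq_div_sqrt_eq hz hrbar.le]
  have hrbar' := sqrt_sqrt_sub_mul_sqrt_sqrt_add hrbar.le |z|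
  set a := |z|
  set Rbar := √(rbar ^ 2 + a ^ 2)
  have hRa : 0 ≤ Rbar - a := sub_nonneg.2 (le_sqrt_sq_add_sq rbar a)
  have hreduce := integral_sq_mul_rpow_sq_sub (c := 2 * a) (p := q + 1 / 2) (s := √(Rbar + a))
    (by positivity) (by positivity) (sqrt_le_sqrt (by linarith))
  rw [sq_sqrt (by linarith), show Rbar + a - 2 * a = Rbar - a by ring,
    rpow_add_one' hRa (by positivity), rpow_natCast_add_half hRa] at hreduce
  generalize (∫ t in √(2 * a)..√(Rbar + a), t ^ 2 * (t ^ 2 - 2 * a) ^ ((q : ℝ) + 1 / 2)) = I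
    at hreduce ⊢
  generalize (∫ t in √(2 * a)..√(Rbar + a), (t ^ 2 - 2 * a) ^ ((q : ℝ) + 1 / 2)) = J
    at hreduce ⊢
  field_simp
  linear_combination hreduce + (Rbar - a) ^ (q + 1) * hrbar'
end

section
/- For 0 < α < 1, α' = sqrt(1−α²), Δ(θ) = sqrt(1−α²sin²θ): the function L_c(θ) = sin θ·log((Δ−α')/(Δ+α')) + log((Δ+α' sin θ)/(Δ−α' sin θ)) − 2(α'/α)·arcsin(α sin θ) is an antiderivative of θ ↦ cos θ·log((Δ−α')/(Δ+α')) on (0, π/2). -/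
open Real

/-
Substituting `x = sin θ`, it suffices to show that `F(x) = x log R(x) + log Q(x) - 2(α'/α) arcsin(α x)`,
with `R = (Δ - α')/(Δ + α')`, `Q = (Δ + α' x)/(Δ - α' x)` and `Δ = √(1 - α² x²)`, has derivative
`log R(x)` on `(-1, 1)`: the chain rule then supplies the factor `cos θ`. Since
`Δ² - α'² = α² (1 - x²)` and `Δ² - α'² x² = 1 - x²`, the three remaining terms of `F'` are
`-2α' x² / (Δ (1 - x²))`, `2α' / (Δ (1 - x²))` and `-2α' / Δ`, which cancel.
-/

noncomputable def logRatio (α x : ℝ) : ℝ :=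
  log ((√(1 - α ^ 2 * x ^ 2) - √(1 - α ^ 2)) / (√(1 - α ^ 2 * x ^ 2) + √(1 - α ^ 2)))

noncomputable def logRatioPrimitive (α x : ℝ) : ℝ :=
  x * logRatio α x +
    log ((√(1 - α ^ 2 * x ^ 2) + √(1 - α ^ 2) * x) / (√(1 - α ^ 2 * x ^ 2) - √(1 - α ^ 2) * x)) -
    2 * (√(1 - α ^ 2) / α) * arcsin (α * x)

theorem HasDerivAt.log_add_div_sub {f g : ℝ → ℝ} {f' g' x : ℝ} (hf : HasDerivAt f f' x)
    (hg : HasDerivAt g g' x) (hadd : f x + g x ≠ 0) (hsub : f x - g x ≠ 0) :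
    HasDerivAt (fun t => Real.log ((f t + g t) / (f t - g t)))
      (2 * (f x * g' - f' * g x) / (f x ^ 2 - g x ^ 2)) x := by
  refine (((hf.add hg).div (hf.sub hg) hsub).log (div_ne_zero hadd hsub)).congr_deriv ?_
  have hsq : f x ^ 2 - g x ^ 2 = (f x + g x) * (f x - g x) := by ring
  simp only [Pi.add_apply, Pi.sub_apply, Pi.div_apply, hsq]
  field_simp
  ring

theorem hasDerivAt_sqrt_one_sub_sq_mul_sq {a x : ℝ} (h : 1 - a ^ 2 * x ^ 2 ≠ 0) :
    HasDerivAt (fun t => √(1 - a ^ 2 * t ^ 2)) (-(a ^ 2 * x) / √(1 - a ^ 2 * x ^ 2)) x := by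
  refine ((((hasDerivAt_pow 2 x).const_mul (a ^ 2)).const_sub 1).sqrt h).congr_deriv ?_
  field_simp
  ring

theorem hasDerivAt_logRatioPrimitive {α x : ℝ} (hα : α ≠ 0) (hα1 : α ^ 2 < 1) (hx : x ^ 2 < 1) :
    HasDerivAt (logRatioPrimitive α) (logRatio α x) x := by
  set β := √(1 - α ^ 2) with hβ
  set Δ := √(1 - α ^ 2 * x ^ 2) with hΔ
  have hαx : (α * x) ^ 2 < 1 := by rw [mul_pow]; nlinarith
  have hβ_pos : 0 < β := sqrt_pos.2 (by linarith)
  have hβ_sq : β ^ 2 = 1 - α ^ 2 := sq_sqrt (by linarith)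
  have hΔ_sq : Δ ^ 2 = 1 - α ^ 2 * x ^ 2 := sq_sqrt (by nlinarith)
  have hβ_lt_Δ : β < Δ := sqrt_lt_sqrt (by linarith) (by nlinarith [sq_pos_of_ne_zero hα])
  have hβx_lt_Δ : |β * x| < Δ := by
    rw [abs_mul, abs_of_pos hβ_pos]
    nlinarith [(sq_lt_one_iff_abs_lt_one x).1 hx, abs_nonneg x]
  have hΔ_ne : Δ ≠ 0 := (hβ_pos.trans hβ_lt_Δ).ne'
  have hR := (hasDerivAt_sqrt_one_sub_sq_mul_sq (a := α) (by nlinarith)).log_add_div_sub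
    (hasDerivAt_const x (-β)) (by linarith) (by linarith)
  simp only [← sub_eq_add_neg, sub_neg_eq_add] at hR
  have hQ := (hasDerivAt_sqrt_one_sub_sq_mul_sq (a := α) (by nlinarith)).log_add_div_sub
    (hasDerivAt_id' (x := x) |>.const_mul β) (by linarith [neg_abs_le (β * x)])
    (by linarith [le_abs_self (β * x)])
  have harcsin := (hasDerivAt_arcsin (by nlinarith) (by nlinarith)).comp x
    (hasDerivAt_id' (x := x) |>.const_mul α)
  refine ((hasDerivAt_id' (x := x)).mul hR |>.add hQ |>.sub (harcsin.const_mul (2 * (β / α))))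
    |>.congr_deriv ?_
  have h1 : Δ ^ 2 - (-β) ^ 2 = α ^ 2 * (1 - x ^ 2) := by
    rw [neg_sq]; linear_combination hΔ_sq - hβ_sq
  have h2 : Δ ^ 2 - (β * x) ^ 2 = 1 - x ^ 2 := by
    rw [mul_pow]; linear_combination hΔ_sq - x ^ 2 * hβ_sq
  rw [h1, h2, mul_pow, ← hΔ]
  have hx' : 1 - x ^ 2 ≠ 0 := by linarith
  simp only [logRatio, ← hβ, ← hΔ]
  field_simp
  linear_combination (2 * β * α ^ 2) * hΔ_sq

/-- for `0 < α < 1`, `α' = sqrt(1-α²)`, `Δ(θ) = sqrt(1-α² sin²θ)`, the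
function `L_c(θ) = sin θ log((Δ-α')/(Δ+α')) + log((Δ+α' sin θ)/(Δ-α' sin θ))
 - 2(α'/α) arcsin(α sin θ)` is an antiderivative of `θ ↦ cos θ log((Δ-α')/(Δ+α'))`
on `(0, π/2)`. -/
theorem stmt18 (α : ℝ) (hα : 0 < α) (hα1 : α < 1) :
    ∀ θ ∈ Set.Ioo (0 : ℝ) (Real.pi / 2),
      HasDerivAt
        (fun θ : ℝ =>
          Real.sin θ *
              Real.log ((Real.sqrt (1 - α ^ 2 * Real.sin θ ^ 2) - Real.sqrt (1 - α ^ 2)) /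
                (Real.sqrt (1 - α ^ 2 * Real.sin θ ^ 2) + Real.sqrt (1 - α ^ 2))) +
            Real.log ((Real.sqrt (1 - α ^ 2 * Real.sin θ ^ 2) +
                Real.sqrt (1 - α ^ 2) * Real.sin θ) /
              (Real.sqrt (1 - α ^ 2 * Real.sin θ ^ 2) -
                Real.sqrt (1 - α ^ 2) * Real.sin θ)) -
            2 * (Real.sqrt (1 - α ^ 2) / α) * Real.arcsin (α * Real.sin θ))
        (Real.cos θ *
          Real.log ((Real.sqrt (1 - α ^ 2 * Real.sin θ ^ 2) - Real.sqrt (1 - α ^ 2)) /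
            (Real.sqrt (1 - α ^ 2 * Real.sin θ ^ 2) + Real.sqrt (1 - α ^ 2)))) θ := by
  intro θ hθ
  have hcos : 0 < cos θ := cos_pos_of_mem_Ioo ⟨by linarith [hθ.1, pi_pos], hθ.2⟩
  have hsin : sin θ ^ 2 < 1 := by nlinarith [sin_sq_add_cos_sq θ]
  exact (hasDerivAt_logRatioPrimitive hα.ne' (by nlinarith) hsin).scomp θ (hasDerivAt_sin θ)
end
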